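/- arXiv:1608.00351 — 2 statements merged into one kernel-verified Lean document; each statement's English description precedes it below -/
import Mathlib

section
/- Let $A$ have full column rank and $x^*$ solve $Ax = b$. For any $x \in \mathbb{R}^n$, $\|A(x - x^*)\|^2 \ge \sigma_{\min}(A)^2 \|x - x^*\|^2$, and consequently the one-step expected error of randomized Kaczmarz satisfies $\mathbb{E}\|x_{k+1} - x^*\|^2 \le \left(1 - \frac{\sigma_{\min}(A)^2}{\|A\|_F^2}\right)\|x_k - x^*\|^2$. -/
/-!
A Kaczmarz step is the orthogonal projection onto the hyperplane of one equation, which contains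
`x*`; by Pythagoras it lowers `‖x - x*‖²` by `⟪a_j, x - x*⟫² / ‖a_j‖²`. Sampling row `j` with
probability `‖a_j‖² / ‖A‖_F²` cancels these denominators, so the expected decrease is exactly
`‖A (x - x*)‖² / ‖A‖_F²`, which is at least `σ_min(A)² ‖x - x*‖² / ‖A‖_F²`.
-/

open scoped RealInnerProductSpace

noncomputable def mulE {m n : ℕ} (M : Matrix (Fin m) (Fin n) ℝ) (v : EuclideanSpace ℝ (Fin n)) :
    EuclideanSpace ℝ (Fin m) := (WithLp.equiv 2 _).symm (M.mulVec ((WithLp.equiv 2 _) v))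

noncomputable def rowE {m n : ℕ} (M : Matrix (Fin m) (Fin n) ℝ) (j : Fin m) :
    EuclideanSpace ℝ (Fin n) := (WithLp.equiv 2 _).symm (M j)

/-- The smallest singular value of `A`, as the infimum of `‖Av‖` over unit vectors. -/
noncomputable def sminE {m n : ℕ} (A : Matrix (Fin m) (Fin n) ℝ) : ℝ :=
  ⨅ v : {v : EuclideanSpace ℝ (Fin n) // ‖v‖ = 1}, ‖mulE A (v : EuclideanSpace ℝ (Fin n))‖

section Kaczmarz

variable {E : Type*} [NormedAddCommGroup E] [InnerProductSpace ℝ E]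

noncomputable def kaczmarzStep (a : E) (β : ℝ) (x : E) : E :=
  x + ((β - ⟪a, x⟫) / ‖a‖ ^ 2) • a

theorem norm_kaczmarzStep_sub_sq {a x xstar : E} {β : ℝ} (hsol : ⟪a, xstar⟫ = β) :
    ‖kaczmarzStep a β x - xstar‖ ^ 2 = ‖x - xstar‖ ^ 2 - ⟪a, x - xstar⟫ ^ 2 / ‖a‖ ^ 2 := by
  rcases eq_or_ne a 0 with rfl | ha
  · simp [kaczmarzStep]
  have hstep : kaczmarzStep a β x - xstar = (x - xstar) - (⟪a, x - xstar⟫ / ‖a‖ ^ 2) • a := by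
    rw [kaczmarzStep, ← hsol, inner_sub_right, add_sub_right_comm, sub_eq_add_neg (x - xstar),
      ← neg_smul, ← neg_div, neg_sub]
  have ha' : ‖a‖ ≠ 0 := norm_ne_zero_iff.mpr ha
  rw [hstep, norm_sub_sq_real, inner_smul_right, norm_smul, mul_pow, Real.norm_eq_abs, sq_abs,
    real_inner_comm]
  field_simp
  ring

variable {ι : Type*} [Fintype ι]

theorem sum_weighted_norm_kaczmarzStep_sub_sq (a : ι → E) {β : ι → ℝ} {xstar : E}
    (hsol : ∀ j, ⟪a j, xstar⟫ = β j) (x : E) (hS : ∑ i, ‖a i‖ ^ 2 ≠ 0) :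
    ∑ j, ‖a j‖ ^ 2 / (∑ i, ‖a i‖ ^ 2) * ‖kaczmarzStep (a j) (β j) x - xstar‖ ^ 2
      = ‖x - xstar‖ ^ 2 - (∑ j, ⟪a j, x - xstar⟫ ^ 2) / ∑ i, ‖a i‖ ^ 2 := by
  have hterm : ∀ j, ‖a j‖ ^ 2 / (∑ i, ‖a i‖ ^ 2) * ‖kaczmarzStep (a j) (β j) x - xstar‖ ^ 2
      = (‖a j‖ ^ 2 * ‖x - xstar‖ ^ 2 - ⟪a j, x - xstar⟫ ^ 2) / ∑ i, ‖a i‖ ^ 2 := by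
    intro j
    rw [norm_kaczmarzStep_sub_sq (hsol j)]
    rcases eq_or_ne (a j) 0 with h | h
    · simp [h]
    · field_simp
  rw [Finset.sum_congr rfl fun j _ => hterm j, ← Finset.sum_div, Finset.sum_sub_distrib,
    ← Finset.sum_mul, sub_div, mul_div_cancel_left₀ _ hS]

theorem sum_weighted_norm_kaczmarzStep_sub_sq_le (a : ι → E) {β : ι → ℝ} {xstar : E}
    (hsol : ∀ j, ⟪a j, xstar⟫ = β j) (x : E) {σ : ℝ}
    (hσ : σ ^ 2 * ‖x - xstar‖ ^ 2 ≤ ∑ j, ⟪a j, x - xstar⟫ ^ 2) :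
    ∑ j, ‖a j‖ ^ 2 / (∑ i, ‖a i‖ ^ 2) * ‖kaczmarzStep (a j) (β j) x - xstar‖ ^ 2
      ≤ (1 - σ ^ 2 / ∑ i, ‖a i‖ ^ 2) * ‖x - xstar‖ ^ 2 := by
  rcases eq_or_ne (∑ i, ‖a i‖ ^ 2) 0 with hS | hS
  · simp only [hS, div_zero, zero_mul, Finset.sum_const_zero, sub_zero, one_mul]
    positivity
  rw [sum_weighted_norm_kaczmarzStep_sub_sq a hsol x hS, sub_mul, one_mul, div_mul_eq_mul_div]
  have hS_pos : 0 < ∑ i, ‖a i‖ ^ 2 :=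
    lt_of_le_of_ne (Finset.sum_nonneg fun i _ => by positivity) hS.symm
  gcongr

end Kaczmarz

section SmallestSingularValue

variable {m n : ℕ} (A : Matrix (Fin m) (Fin n) ℝ)

theorem mulE_eq_toEuclideanLin (v : EuclideanSpace ℝ (Fin n)) :
    mulE A v = Matrix.toEuclideanLin A v := rfl

theorem norm_mulE_sq (v : EuclideanSpace ℝ (Fin n)) :
    ‖mulE A v‖ ^ 2 = ∑ j, ⟪rowE A j, v⟫ ^ 2 := by
  rw [EuclideanSpace.real_norm_sq_eq]
  simp [mulE, rowE, PiLp.inner_apply, Matrix.mulVec, dotProduct, mul_comm]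

theorem sminE_nonneg : 0 ≤ sminE A :=
  Real.iInf_nonneg fun _ => norm_nonneg _

theorem sminE_mul_norm_le_norm_mulE (v : EuclideanSpace ℝ (Fin n)) :
    sminE A * ‖v‖ ≤ ‖mulE A v‖ := by
  rcases eq_or_ne v 0 with rfl | hv
  · simp
  have hv' : 0 < ‖v‖ := norm_pos_iff.mpr hv
  let u : {w : EuclideanSpace ℝ (Fin n) // ‖w‖ = 1} :=
    ⟨‖v‖⁻¹ • v, by rw [norm_smul, norm_inv, norm_norm, inv_mul_cancel₀ hv'.ne']⟩
  have hu : sminE A ≤ ‖v‖⁻¹ * ‖mulE A v‖ := by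
    calc sminE A ≤ ‖mulE A u‖ := ciInf_le ⟨0, by rintro _ ⟨w, rfl⟩; exact norm_nonneg _⟩ u
      _ = ‖v‖⁻¹ * ‖mulE A v‖ := by
        rw [mulE_eq_toEuclideanLin, map_smul, norm_smul, norm_inv, norm_norm,
          ← mulE_eq_toEuclideanLin]
  rwa [le_inv_mul_iff₀ hv', mul_comm] at hu

theorem sminE_sq_mul_norm_sq_le (v : EuclideanSpace ℝ (Fin n)) :
    sminE A ^ 2 * ‖v‖ ^ 2 ≤ ‖mulE A v‖ ^ 2 := by
  rw [← mul_pow]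
  exact pow_le_pow_left₀ (mul_nonneg (sminE_nonneg A) (norm_nonneg v))
    (sminE_mul_norm_le_norm_mulE A v) 2

end SmallestSingularValue

theorem rk_one_step_contraction_general {m n : ℕ}
    (A : Matrix (Fin m) (Fin n) ℝ) (b : Fin m → ℝ)
    (xstar xk : EuclideanSpace ℝ (Fin n))
    (hstar : ∀ j, ⟪rowE A j, xstar⟫ = b j) :
    (∀ x : EuclideanSpace ℝ (Fin n),
        ‖mulE A (x - xstar)‖ ^ 2 ≥ sminE A ^ 2 * ‖x - xstar‖ ^ 2) ∧
    ∑ j : Fin m, (‖rowE A j‖ ^ 2 / (∑ i : Fin m, ‖rowE A i‖ ^ 2)) *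
        ‖(xk + ((b j - ⟪rowE A j, xk⟫) / ‖rowE A j‖ ^ 2) • rowE A j) - xstar‖ ^ 2
      ≤ (1 - sminE A ^ 2 / (∑ i : Fin m, ‖rowE A i‖ ^ 2)) * ‖xk - xstar‖ ^ 2 := by
  have hlower : ∀ x : EuclideanSpace ℝ (Fin n),
      ‖mulE A (x - xstar)‖ ^ 2 ≥ sminE A ^ 2 * ‖x - xstar‖ ^ 2 :=
    fun x => sminE_sq_mul_norm_sq_le A (x - xstar)
  exact ⟨hlower, sum_weighted_norm_kaczmarzStep_sub_sq_le (rowE A) hstar xk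
    ((hlower xk).trans_eq (norm_mulE_sq A _))⟩

/-- The singular-value lower bound for full-column-rank `A`, and the resulting
one-step expected contraction of the randomized Kaczmarz iteration. -/
theorem rk_one_step_contraction {m n : ℕ}
    (A : Matrix (Fin m) (Fin n) ℝ) (b : Fin m → ℝ)
    (xstar xk : EuclideanSpace ℝ (Fin n))
    (hrank : A.rank = n) (hstar : ∀ j, ⟪rowE A j, xstar⟫ = b j) :
    (∀ x : EuclideanSpace ℝ (Fin n),
        ‖mulE A (x - xstar)‖ ^ 2 ≥ sminE A ^ 2 * ‖x - xstar‖ ^ 2) ∧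
    ∑ j : Fin m, (‖rowE A j‖ ^ 2 / (∑ i : Fin m, ‖rowE A i‖ ^ 2)) *
        ‖(xk + ((b j - ⟪rowE A j, xk⟫) / ‖rowE A j‖ ^ 2) • rowE A j) - xstar‖ ^ 2
      ≤ (1 - sminE A ^ 2 / (∑ i : Fin m, ‖rowE A i‖ ^ 2)) * ‖xk - xstar‖ ^ 2 :=
  rk_one_step_contraction_general A b xstar xk hstar
end

section
/- Let $A \in \mathbb{R}^{m \times n}$ have full column rank, $B \in \mathbb{R}^{n \times n}$ be invertible with $C = BB^T$, and let $x^*$ solve $Ax=b$. Suppose rows are sampled with probability proportional to $\|B^T a_j\|^2$ and the APK update $x_{k+1} = x_k + \frac{b_j - a_j^T x_k}{a_j^T C a_j} C a_j$ is applied starting from $x_{t_0}$. Then $\mathbb{E}\|x_k - x^*\|^2 \le \lambda_{\max}(C)\left(1 - \frac{\sigma_{\min}(AB)^2}{\|AB\|_F^2}\right)^{k - t_0} \|B^{-1}(x_{t_0} - x^*)\|^2$. -/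
open scoped RealInnerProductSpace Matrix

/-- The largest eigenvalue of a symmetric matrix `C`, as the supremum of the
Rayleigh quotient over unit vectors. -/
noncomputable def lmaxE {n : ℕ} (C : Matrix (Fin n) (Fin n) ℝ) : ℝ :=
  ⨆ v : {v : EuclideanSpace ℝ (Fin n) // ‖v‖ = 1},
    ⟪(v : EuclideanSpace ℝ (Fin n)), mulE C (v : EuclideanSpace ℝ (Fin n))⟫

/-- One APK step using row `j` with preconditioner `C`. -/
noncomputable def apkStep {m n : ℕ} (A : Matrix (Fin m) (Fin n) ℝ)
    (C : Matrix (Fin n) (Fin n) ℝ) (b : Fin m → ℝ) (j : Fin m)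
    (x : EuclideanSpace ℝ (Fin n)) : EuclideanSpace ℝ (Fin n) :=
  x + ((b j - ⟪rowE A j, x⟫) / ⟪rowE A j, mulE C (rowE A j)⟫) • mulE C (rowE A j)

/-- The APK iterates determined by a sequence `ω` of chosen rows, starting at `xt0`. -/
noncomputable def apkIter {m n : ℕ} (A : Matrix (Fin m) (Fin n) ℝ)
    (C : Matrix (Fin n) (Fin n) ℝ) (b : Fin m → ℝ) (xt0 : EuclideanSpace ℝ (Fin n)) :
    (k : ℕ) → (Fin k → Fin m) → EuclideanSpace ℝ (Fin n)
  | 0, _ => xt0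
  | (k + 1), ω => apkStep A C b (ω (Fin.last k)) (apkIter A C b xt0 k (fun i => ω i.castSucc))


/-!
Writing `y = B⁻¹ (x - x*)`, one APK step with row `j` becomes the Kaczmarz step
`y ↦ y - (⟪w_j, y⟫ / ‖w_j‖²) w_j` for the row `w_j = Bᵀ a_j` of `AB`, and the sampling
probabilities are the Kaczmarz ones for `AB`. Pythagoras and `∑ ⟪w_j, y⟫² = ‖AB y‖² ≥ σ_min² ‖y‖²`
make the expected value of `‖y‖²` contract by `1 - σ_min(AB)² / ‖AB‖_F²` per step, and
`‖B y‖² ≤ λ_max(BBᵀ) ‖y‖²` transfers the bound back to `x`.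
-/

open Finset

variable {m n p : ℕ}

section MatrixAction

lemma mulE_apply (M : Matrix (Fin m) (Fin n) ℝ) (v : EuclideanSpace ℝ (Fin n)) (j : Fin m) :
    mulE M v j = ∑ i, M j i * v i := by
  simp [mulE, Matrix.mulVec, dotProduct]

lemma mulE_mul (M : Matrix (Fin m) (Fin n) ℝ) (N : Matrix (Fin n) (Fin p) ℝ)
    (v : EuclideanSpace ℝ (Fin p)) : mulE (M * N) v = mulE M (mulE N v) := by
  simp [mulE, Matrix.mulVec_mulVec]

lemma mulE_one (v : EuclideanSpace ℝ (Fin n)) : mulE (1 : Matrix (Fin n) (Fin n) ℝ) v = v := by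
  simp [mulE]

lemma mulE_add (M : Matrix (Fin m) (Fin n) ℝ) (u v : EuclideanSpace ℝ (Fin n)) :
    mulE M (u + v) = mulE M u + mulE M v := by
  ext j; simp [mulE_apply, mul_add, sum_add_distrib]

lemma mulE_smul (M : Matrix (Fin m) (Fin n) ℝ) (c : ℝ) (v : EuclideanSpace ℝ (Fin n)) :
    mulE M (c • v) = c • mulE M v := by
  ext j; simp [mulE_apply, mul_sum, mul_left_comm]

lemma inner_mulE (M : Matrix (Fin m) (Fin n) ℝ) (u : EuclideanSpace ℝ (Fin m))
    (v : EuclideanSpace ℝ (Fin n)) : ⟪u, mulE M v⟫ = ⟪mulE Mᵀ u, v⟫ := by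
  simp only [PiLp.inner_apply, mulE_apply, Matrix.transpose_apply, RCLike.inner_apply,
    conj_trivial, sum_mul, mul_sum]
  rw [sum_comm]
  exact sum_congr rfl fun _ _ => sum_congr rfl fun _ _ => by ring

lemma inner_rowE (M : Matrix (Fin m) (Fin n) ℝ) (v : EuclideanSpace ℝ (Fin n)) (j : Fin m) :
    ⟪rowE M j, v⟫ = mulE M v j := by
  simp [PiLp.inner_apply, mulE_apply, rowE, mul_comm]

lemma rowE_mul (M : Matrix (Fin m) (Fin n) ℝ) (N : Matrix (Fin n) (Fin p) ℝ) (j : Fin m) :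
    rowE (M * N) j = mulE Nᵀ (rowE M j) := by
  ext i; simp [rowE, mulE_apply, Matrix.mul_apply, mul_comm]

lemma sum_inner_rowE_sq (M : Matrix (Fin m) (Fin n) ℝ) (v : EuclideanSpace ℝ (Fin n)) :
    ∑ j, ⟪rowE M j, v⟫ ^ 2 = ‖mulE M v‖ ^ 2 := by
  simp [EuclideanSpace.norm_sq_eq, inner_rowE]

lemma norm_mulE_sq_le (M : Matrix (Fin m) (Fin n) ℝ) (v : EuclideanSpace ℝ (Fin n)) :
    ‖mulE M v‖ ^ 2 ≤ (∑ j, ‖rowE M j‖ ^ 2) * ‖v‖ ^ 2 := by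
  rw [← sum_inner_rowE_sq, sum_mul]
  gcongr with j
  rw [← mul_pow, ← sq_abs]
  gcongr
  exact abs_real_inner_le_norm _ _

end MatrixAction

section Extremal

lemma sminE_nonneg_s9 (M : Matrix (Fin m) (Fin n) ℝ) : 0 ≤ sminE M :=
  Real.iInf_nonneg fun _ => norm_nonneg _

lemma sminE_mul_norm_le (M : Matrix (Fin m) (Fin n) ℝ) (v : EuclideanSpace ℝ (Fin n)) :
    sminE M * ‖v‖ ≤ ‖mulE M v‖ := by
  rcases eq_or_ne v 0 with rfl | hv
  · simp [mulE]
  · have hunit : ‖‖v‖⁻¹ • v‖ = 1 := norm_smul_inv_norm hv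
    have hle : sminE M ≤ ‖mulE M (‖v‖⁻¹ • v)‖ :=
      ciInf_le ⟨0, by rintro _ ⟨_, rfl⟩; positivity⟩ (⟨_, hunit⟩ : {u // ‖u‖ = 1})
    rw [mulE_smul, norm_smul, norm_inv, norm_norm] at hle
    calc sminE M * ‖v‖ ≤ ‖v‖⁻¹ * ‖mulE M v‖ * ‖v‖ := by gcongr
      _ = ‖mulE M v‖ := by field_simp [norm_ne_zero_iff.mpr hv]

lemma sminE_sq_le_sum_norm_rowE_sq (M : Matrix (Fin m) (Fin n) ℝ) :
    sminE M ^ 2 ≤ ∑ j, ‖rowE M j‖ ^ 2 := by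
  rcases isEmpty_or_nonempty {v : EuclideanSpace ℝ (Fin n) // ‖v‖ = 1} with h | ⟨⟨v, hv⟩⟩
  · rw [sminE, Real.iInf_of_isEmpty, zero_pow two_ne_zero]
    positivity
  · have hσ := sminE_nonneg_s9 M
    calc sminE M ^ 2 ≤ ‖mulE M v‖ ^ 2 := by
          gcongr; simpa [hv] using sminE_mul_norm_le M v
      _ ≤ ∑ j, ‖rowE M j‖ ^ 2 := by simpa [hv] using norm_mulE_sq_le M v

lemma inner_mulE_le_lmaxE_mul (C : Matrix (Fin n) (Fin n) ℝ) (v : EuclideanSpace ℝ (Fin n)) :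
    ⟪v, mulE C v⟫ ≤ lmaxE C * ‖v‖ ^ 2 := by
  rcases eq_or_ne v 0 with rfl | hv
  · simp
  have hbdd : BddAbove (Set.range fun u : {u : EuclideanSpace ℝ (Fin n) // ‖u‖ = 1} =>
      ⟪(u : EuclideanSpace ℝ (Fin n)), mulE C u⟫) := by
    refine ⟨√(∑ j, ‖rowE C j‖ ^ 2), ?_⟩
    rintro _ ⟨⟨u, hu⟩, rfl⟩
    calc ⟪u, mulE C u⟫ ≤ ‖u‖ * ‖mulE C u‖ := real_inner_le_norm _ _
      _ ≤ √(∑ j, ‖rowE C j‖ ^ 2) :=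
        Real.le_sqrt_of_sq_le (by simpa [hu] using norm_mulE_sq_le C u)
  have hunit : ‖‖v‖⁻¹ • v‖ = 1 := norm_smul_inv_norm hv
  have hle : (‖v‖ ^ 2)⁻¹ * ⟪v, mulE C v⟫ ≤ lmaxE C := by
    have : ⟪‖v‖⁻¹ • v, mulE C (‖v‖⁻¹ • v)⟫ ≤ lmaxE C :=
      le_ciSup hbdd (⟨_, hunit⟩ : {u // ‖u‖ = 1})
    rwa [mulE_smul, real_inner_smul_left, real_inner_smul_right, ← mul_assoc, ← mul_inv,
      ← sq] at this
  have hpos : 0 < ‖v‖ ^ 2 := by positivity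
  calc ⟪v, mulE C v⟫ = (‖v‖ ^ 2)⁻¹ * ⟪v, mulE C v⟫ * ‖v‖ ^ 2 := by field_simp
    _ ≤ lmaxE C * ‖v‖ ^ 2 := by gcongr

lemma norm_mulE_transpose_sq (B : Matrix (Fin n) (Fin n) ℝ) (v : EuclideanSpace ℝ (Fin n)) :
    ‖mulE Bᵀ v‖ ^ 2 = ⟪v, mulE (B * Bᵀ) v⟫ := by
  rw [mulE_mul, inner_mulE, real_inner_self_eq_norm_sq]

lemma lmaxE_mul_transpose_nonneg (B : Matrix (Fin n) (Fin n) ℝ) : 0 ≤ lmaxE (B * Bᵀ) :=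
  Real.iSup_nonneg fun v => (norm_mulE_transpose_sq B v) ▸ sq_nonneg _

lemma norm_mulE_sq_le_lmaxE_mul (B : Matrix (Fin n) (Fin n) ℝ) (u : EuclideanSpace ℝ (Fin n)) :
    ‖mulE B u‖ ^ 2 ≤ lmaxE (B * Bᵀ) * ‖u‖ ^ 2 := by
  set z := mulE B u
  rcases eq_or_ne z 0 with hz | hz
  · rw [hz, norm_zero, zero_pow two_ne_zero]
    have := lmaxE_mul_transpose_nonneg B
    positivity
  have hz_sq : ‖z‖ ^ 2 ≤ ‖mulE Bᵀ z‖ * ‖u‖ := by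
    rw [← real_inner_self_eq_norm_sq, inner_mulE]
    exact real_inner_le_norm _ _
  have hBt : ‖mulE Bᵀ z‖ ^ 2 ≤ lmaxE (B * Bᵀ) * ‖z‖ ^ 2 :=
    norm_mulE_transpose_sq B z ▸ inner_mulE_le_lmaxE_mul _ z
  have hpos : 0 < ‖z‖ ^ 2 := by positivity
  refine le_of_mul_le_mul_right ?_ hpos
  calc ‖z‖ ^ 2 * ‖z‖ ^ 2 ≤ (‖mulE Bᵀ z‖ * ‖u‖) ^ 2 := by rw [← sq]; gcongr
    _ = ‖mulE Bᵀ z‖ ^ 2 * ‖u‖ ^ 2 := mul_pow _ _ _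
    _ ≤ lmaxE (B * Bᵀ) * ‖z‖ ^ 2 * ‖u‖ ^ 2 := by gcongr
    _ = lmaxE (B * Bᵀ) * ‖u‖ ^ 2 * ‖z‖ ^ 2 := by ring

end Extremal

section Kaczmarz

variable {E : Type*} [NormedAddCommGroup E] [InnerProductSpace ℝ E]

lemma norm_sub_proj_sq (w y : E) :
    ‖y - (⟪w, y⟫ / ⟪w, w⟫) • w‖ ^ 2 = ‖y‖ ^ 2 - ⟪w, y⟫ ^ 2 / ‖w‖ ^ 2 := by
  rcases eq_or_ne w 0 with rfl | hw
  · simp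
  have hw2 : ‖w‖ ^ 2 ≠ 0 := by positivity
  rw [norm_sub_sq_real, real_inner_smul_right, norm_smul, mul_pow, Real.norm_eq_abs, sq_abs,
    real_inner_comm y w, real_inner_self_eq_norm_sq]
  field_simp
  ring

lemma sum_weighted_norm_sub_proj_sq_le {ι : Type*} [Fintype ι] (w : ι → E) (σ : ℝ) (y : E)
    (hσ : σ ^ 2 * ‖y‖ ^ 2 ≤ ∑ j, ⟪w j, y⟫ ^ 2) :
    ∑ j, ‖w j‖ ^ 2 / (∑ l, ‖w l‖ ^ 2) * ‖y - (⟪w j, y⟫ / ⟪w j, w j⟫) • w j‖ ^ 2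
      ≤ (1 - σ ^ 2 / ∑ l, ‖w l‖ ^ 2) * ‖y‖ ^ 2 := by
  set F := ∑ l, ‖w l‖ ^ 2
  rcases eq_or_ne F 0 with hF | hF
  · simp [hF]
  have hterm : ∀ j, ‖w j‖ ^ 2 / F * ‖y - (⟪w j, y⟫ / ⟪w j, w j⟫) • w j‖ ^ 2
      = (‖w j‖ ^ 2 * ‖y‖ ^ 2 - ⟪w j, y⟫ ^ 2) / F := by
    intro j
    rw [norm_sub_proj_sq]
    rcases eq_or_ne (w j) 0 with hj | hj
    · simp [hj]
    · field_simp
  calc ∑ j, ‖w j‖ ^ 2 / F * ‖y - (⟪w j, y⟫ / ⟪w j, w j⟫) • w j‖ ^ 2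
        = (F * ‖y‖ ^ 2 - ∑ j, ⟪w j, y⟫ ^ 2) / F := by
          rw [sum_congr rfl fun j _ => hterm j, ← sum_div, sum_sub_distrib, ← sum_mul]
    _ ≤ (F * ‖y‖ ^ 2 - σ ^ 2 * ‖y‖ ^ 2) / F := by gcongr
    _ = (1 - σ ^ 2 / F) * ‖y‖ ^ 2 := by field_simp

end Kaczmarz

lemma sum_weighted_norm_sub_proj_rowE_sq_le (M : Matrix (Fin m) (Fin n) ℝ)
    (y : EuclideanSpace ℝ (Fin n)) :
    ∑ j, ‖rowE M j‖ ^ 2 / (∑ l, ‖rowE M l‖ ^ 2) *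
        ‖y - (⟪rowE M j, y⟫ / ⟪rowE M j, rowE M j⟫) • rowE M j‖ ^ 2
      ≤ (1 - sminE M ^ 2 / ∑ l, ‖rowE M l‖ ^ 2) * ‖y‖ ^ 2 := by
  refine sum_weighted_norm_sub_proj_sq_le (rowE M) (sminE M) y ?_
  rw [sum_inner_rowE_sq, ← mul_pow]
  gcongr
  · exact mul_nonneg (sminE_nonneg_s9 M) (norm_nonneg y)
  · exact sminE_mul_norm_le M y

lemma sum_prod_mul_le_pow_mul {ι α : Type*} [Fintype ι] (p : ι → ℝ) (hp : ∀ j, 0 ≤ p j)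
    (T : ι → α → α) (V : α → ℝ) {r : ℝ} (hr : 0 ≤ r) (hT : ∀ x, ∑ j, p j * V (T j x) ≤ r * V x)
    (iter : (k : ℕ) → (Fin k → ι) → α) (x₀ : α) (h₀ : ∀ ω, iter 0 ω = x₀)
    (hsucc : ∀ k ω j, iter (k + 1) (Fin.snoc ω j) = T j (iter k ω)) (K : ℕ) :
    ∑ ω : Fin K → ι, (∏ i, p (ω i)) * V (iter K ω) ≤ r ^ K * V x₀ := by
  induction K with
  | zero => simp [h₀]
  | succ K ih =>
    have hweight : ∀ ω : Fin K → ι, 0 ≤ ∏ i, p (ω i) := fun ω => prod_nonneg fun i _ => hp (ω i)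
    calc ∑ ω : Fin (K + 1) → ι, (∏ i, p (ω i)) * V (iter (K + 1) ω)
        = ∑ ω : Fin K → ι, (∏ i, p (ω i)) * ∑ j, p j * V (T j (iter K ω)) := by
          rw [← (Fin.snocEquiv fun _ => ι).sum_comp, Fintype.sum_prod_type, sum_comm]
          refine sum_congr rfl fun ω _ => ?_
          rw [mul_sum]
          refine sum_congr rfl fun j _ => ?_
          have hsnoc : (Fin.snocEquiv fun _ => ι) (j, ω) = Fin.snoc ω j := rfl
          rw [hsnoc, hsucc, Fin.prod_univ_castSucc]
          simp only [Fin.snoc_castSucc, Fin.snoc_last]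
          ring
      _ ≤ ∑ ω : Fin K → ι, (∏ i, p (ω i)) * (r * V (iter K ω)) := by
          gcongr with ω
          exacts [hweight ω, hT _]
      _ = r * ∑ ω : Fin K → ι, (∏ i, p (ω i)) * V (iter K ω) := by
          rw [mul_sum]; exact sum_congr rfl fun ω _ => by ring
      _ ≤ r ^ (K + 1) * V x₀ := by
          rw [pow_succ', mul_assoc]; gcongr

section APK

variable (A : Matrix (Fin m) (Fin n) ℝ) (b : Fin m → ℝ)

lemma apkIter_snoc (C : Matrix (Fin n) (Fin n) ℝ) (x₀ : EuclideanSpace ℝ (Fin n)) (k : ℕ)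
    (ω : Fin k → Fin m) (j : Fin m) :
    apkIter A C b x₀ (k + 1) (Fin.snoc ω j) = apkStep A C b j (apkIter A C b x₀ k ω) := by
  simp [apkIter]

lemma mulE_inv_apkStep_sub {B : Matrix (Fin n) (Fin n) ℝ} (hB : IsUnit B.det)
    {xstar : EuclideanSpace ℝ (Fin n)} {j : Fin m} (hj : ⟪rowE A j, xstar⟫ = b j)
    (x : EuclideanSpace ℝ (Fin n)) :
    mulE B⁻¹ (apkStep A (B * Bᵀ) b j x - xstar) =
      mulE B⁻¹ (x - xstar) - (⟪rowE (A * B) j, mulE B⁻¹ (x - xstar)⟫ /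
        ⟪rowE (A * B) j, rowE (A * B) j⟫) • rowE (A * B) j := by
  set y := mulE B⁻¹ (x - xstar)
  set w := rowE (A * B) j
  have hw : w = mulE Bᵀ (rowE A j) := rowE_mul A B j
  have hBy : mulE B y = x - xstar := by
    rw [← mulE_mul, Matrix.mul_nonsing_inv B hB, mulE_one]
  have hnum : b j - ⟪rowE A j, x⟫ = -⟪w, y⟫ := by
    rw [hw, ← inner_mulE, hBy, inner_sub_right, hj]; ring
  have hden : ⟪rowE A j, mulE (B * Bᵀ) (rowE A j)⟫ = ⟪w, w⟫ := by
    rw [mulE_mul, inner_mulE, hw]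
  have hdir : mulE B⁻¹ (mulE (B * Bᵀ) (rowE A j)) = w := by
    rw [← mulE_mul, ← Matrix.mul_assoc, Matrix.nonsing_inv_mul B hB, Matrix.one_mul, hw]
  rw [apkStep, add_sub_right_comm, mulE_add, mulE_smul, hdir, hnum, hden, neg_div, neg_smul,
    ← sub_eq_add_neg]

lemma norm_sq_le_lmaxE_mul_norm_mulE_inv_sq {B : Matrix (Fin n) (Fin n) ℝ} (hB : IsUnit B.det)
    (v : EuclideanSpace ℝ (Fin n)) : ‖v‖ ^ 2 ≤ lmaxE (B * Bᵀ) * ‖mulE B⁻¹ v‖ ^ 2 := by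
  simpa only [← mulE_mul, Matrix.mul_nonsing_inv B hB, mulE_one]
    using norm_mulE_sq_le_lmaxE_mul B (mulE B⁻¹ v)

end APK

-- `K` stands for `k - t₀`, and the sum over `ω` is the expectation over the sampled rows.
theorem apk_convergence_general {m n : ℕ}
    (A : Matrix (Fin m) (Fin n) ℝ) (B : Matrix (Fin n) (Fin n) ℝ)
    (b : Fin m → ℝ) (xstar xt0 : EuclideanSpace ℝ (Fin n))
    (hB : IsUnit B)
    (hstar : ∀ j, ⟪rowE A j, xstar⟫ = b j) :
    ∀ K : ℕ,
      ∑ ω : Fin K → Fin m,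
          (∏ i : Fin K,
            ‖mulE Bᵀ (rowE A (ω i))‖ ^ 2 / (∑ l : Fin m, ‖mulE Bᵀ (rowE A l)‖ ^ 2)) *
            ‖apkIter A (B * Bᵀ) b xt0 K ω - xstar‖ ^ 2
        ≤ lmaxE (B * Bᵀ) *
            (1 - sminE (A * B) ^ 2 / (∑ l : Fin m, ‖mulE Bᵀ (rowE A l)‖ ^ 2)) ^ K *
            ‖mulE B⁻¹ (xt0 - xstar)‖ ^ 2 := by
  intro K
  have hdet : IsUnit B.det := (Matrix.isUnit_iff_isUnit_det B).mp hB
  simp only [← rowE_mul]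
  set p : Fin m → ℝ := fun j => ‖rowE (A * B) j‖ ^ 2 / ∑ l, ‖rowE (A * B) l‖ ^ 2
  set V : EuclideanSpace ℝ (Fin n) → ℝ := fun x => ‖mulE B⁻¹ (x - xstar)‖ ^ 2
  set x : (k : ℕ) → (Fin k → Fin m) → EuclideanSpace ℝ (Fin n) := apkIter A (B * Bᵀ) b xt0
  have hrate : 0 ≤ 1 - sminE (A * B) ^ 2 / ∑ l, ‖rowE (A * B) l‖ ^ 2 :=
    sub_nonneg.2 (div_le_one_of_le₀ (sminE_sq_le_sum_norm_rowE_sq _) (by positivity))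
  have hdecay := sum_prod_mul_le_pow_mul p (fun j => by positivity) (apkStep A (B * Bᵀ) b) V
    hrate (fun y => by
      simpa only [p, V, mulE_inv_apkStep_sub A b hdet (hstar _)]
        using sum_weighted_norm_sub_proj_rowE_sq_le (A * B) (mulE B⁻¹ (y - xstar)))
    x xt0 (fun _ => rfl) (apkIter_snoc A b _ xt0) K
  calc ∑ ω : Fin K → Fin m, (∏ i, p (ω i)) * ‖x K ω - xstar‖ ^ 2
      ≤ ∑ ω : Fin K → Fin m, (∏ i, p (ω i)) * (lmaxE (B * Bᵀ) * V (x K ω)) := by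
        gcongr with ω
        exact norm_sq_le_lmaxE_mul_norm_mulE_inv_sq hdet _
    _ = lmaxE (B * Bᵀ) * ∑ ω : Fin K → Fin m, (∏ i, p (ω i)) * V (x K ω) := by
        rw [mul_sum]; exact sum_congr rfl fun _ _ => by ring
    _ ≤ _ := by
        rw [mul_assoc]
        exact mul_le_mul_of_nonneg_left hdecay (lmaxE_mul_transpose_nonneg B)

/-- Convergence of the APK algorithm: rows sampled with probability proportional to
`‖Bᵀa_j‖²`, `k - t₀` steps taken from `x_{t₀}`. -/
theorem apk_convergence {m n : ℕ}
    (A : Matrix (Fin m) (Fin n) ℝ) (B : Matrix (Fin n) (Fin n) ℝ)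
    (b : Fin m → ℝ) (xstar xt0 : EuclideanSpace ℝ (Fin n))
    (hrank : A.rank = n) (hB : IsUnit B)
    (hstar : ∀ j, ⟪rowE A j, xstar⟫ = b j) :
    ∀ K : ℕ,
      ∑ ω : Fin K → Fin m,
          (∏ i : Fin K,
            ‖mulE Bᵀ (rowE A (ω i))‖ ^ 2 / (∑ l : Fin m, ‖mulE Bᵀ (rowE A l)‖ ^ 2)) *
            ‖apkIter A (B * Bᵀ) b xt0 K ω - xstar‖ ^ 2
        ≤ lmaxE (B * Bᵀ) *
            (1 - sminE (A * B) ^ 2 / (∑ l : Fin m, ‖mulE Bᵀ (rowE A l)‖ ^ 2)) ^ K *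
            ‖mulE B⁻¹ (xt0 - xstar)‖ ^ 2 :=
  apk_convergence_general A B b xstar xt0 hB hstar
end
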